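/- For each fixed n ≥ 1, there is a constant C > 0 such that |B_n^(m) - (n!/2^{n-1}) m^{n-1}| ≤ C m^{n-2} for all m ≥ 1 (with the convention m^{-1} interpreted as 1/m for n = 1, i.e. for n = 1 the difference is 0). -/
import Mathlib


/-- Stirling numbers of the second kind. -/
def stirling : ℕ → ℕ → ℕ
  | 0, 0 => 1
  | 0, _ + 1 => 0
  | _ + 1, 0 => 0
  | n + 1, k + 1 => (k + 1) * stirling n (k + 1) + stirling n k

/-- Higher order Bell numbers: `higherBell m n` is `B_n^(m)`. -/
def higherBell : ℕ → ℕ → ℕ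
  | 0, _ => 1
  | _ + 1, 0 => 1
  | m + 1, n + 1 => ∑ k ∈ Finset.Icc 1 (n + 1), higherBell m k * stirling (n + 1) k

open Finset

lemma stirling_eq_zero_of_lt : ∀ n k, n < k → stirling n k = 0 := by
  intro n
  induction n with
  | zero => intro k hk; match k, hk with | k+1, _ => rfl
  | succ n ih =>
    intro k hk
    match k, hk with
    | k+1, hk =>
      show (k+1) * stirling n (k+1) + stirling n k = 0
      rw [ih (k+1) (by omega), ih k (by omega)]; ring

lemma stirling_self : ∀ n, stirling n n = 1 := by
  intro n
  induction n with
  | zero => rfl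
  | succ n ih =>
    show (n+1) * stirling n (n+1) + stirling n n = 1
    rw [stirling_eq_zero_of_lt n (n+1) (by omega), ih]; ring

lemma stirling_succ_self : ∀ n, 2 * stirling (n+1) n = n * (n+1) := by
  intro n
  induction n with
  | zero => rfl
  | succ n ih =>
    show 2 * ((n+1) * stirling (n+1) (n+1) + stirling (n+1) n) = (n+1) * (n+2)
    rw [stirling_self]
    nlinarith [ih]

lemma hb_one (m : ℕ) : higherBell m 1 = 1 := by
  induction m with
  | zero => rfl
  | succ m ih =>
    show ∑ k ∈ Finset.Icc 1 1, higherBell m k * stirling 1 k = 1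
    rw [Finset.Icc_self, Finset.sum_singleton, ih, stirling_self]

lemma hb_two (m : ℕ) : higherBell m 2 = m + 1 := by
  induction m with
  | zero => rfl
  | succ m ih =>
    show ∑ k ∈ Finset.Icc 1 2, higherBell m k * stirling 2 k = m + 2
    rw [show (2:ℕ) = 1 + 1 from rfl, Finset.sum_Icc_succ_top (by omega), Finset.Icc_self,
      Finset.sum_singleton, hb_one, ih, stirling_self]
    have h1 : stirling 2 1 = 1 := rfl
    rw [show (1:ℕ)+1 = 2 from rfl, h1]
    ring

lemma hb_telescope (t m : ℕ) :
    higherBell m (t+1) = 1 + ∑ j ∈ Finset.range m,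
      ∑ k ∈ Finset.Icc 1 t, higherBell j k * stirling (t+1) k := by
  induction m with
  | zero => rfl
  | succ m ih =>
    show ∑ k ∈ Finset.Icc 1 (t+1), higherBell m k * stirling (t+1) k = _
    rw [Finset.sum_Icc_succ_top (by omega), stirling_self, Finset.sum_range_succ]
    omega

/-- `Bnd e f` : `|f m| ≤ C * m ^ e` for all `m ≥ 1`. -/
def Bnd (e : ℕ) (f : ℕ → ℝ) : Prop :=
  ∃ C : ℝ, 0 < C ∧ ∀ m : ℕ, 1 ≤ m → |f m| ≤ C * (m : ℝ) ^ e

namespace Bnd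

lemma one_le_cast_pow {m : ℕ} (hm : 1 ≤ m) (e : ℕ) : (1:ℝ) ≤ (m:ℝ) ^ e :=
  one_le_pow₀ (by exact_mod_cast hm)

lemma cast_pow_pos {m : ℕ} (hm : 1 ≤ m) (e : ℕ) : (0:ℝ) < (m:ℝ) ^ e :=
  lt_of_lt_of_le one_pos (one_le_cast_pow hm e)

lemma add {e : ℕ} {f g : ℕ → ℝ} (hf : Bnd e f) (hg : Bnd e g) :
    Bnd e (fun m => f m + g m) := by
  obtain ⟨C, hC, h⟩ := hf
  obtain ⟨D, hD, h'⟩ := hg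
  refine ⟨C + D, by linarith, fun m hm => ?_⟩
  calc |f m + g m| ≤ |f m| + |g m| := abs_add_le _ _
    _ ≤ C * (m:ℝ)^e + D * (m:ℝ)^e := add_le_add (h m hm) (h' m hm)
    _ = (C + D) * (m:ℝ)^e := by ring

lemma const (e : ℕ) (c : ℝ) : Bnd e (fun _ => c) := by
  refine ⟨|c| + 1, by positivity, fun m hm => ?_⟩
  have h1 := one_le_cast_pow hm e
  have h2 : (0:ℝ) ≤ |c| := abs_nonneg c
  nlinarith

lemma cmul {e : ℕ} {f : ℕ → ℝ} (c : ℝ) (hf : Bnd e f) :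
    Bnd e (fun m => c * f m) := by
  obtain ⟨C, hC, h⟩ := hf
  refine ⟨(|c| + 1) * C, by positivity, fun m hm => ?_⟩
  rw [abs_mul]
  have h1 := h m hm
  have h2 : (0:ℝ) ≤ |f m| := abs_nonneg _
  have h3 : (0:ℝ) ≤ |c| := abs_nonneg _
  nlinarith

lemma mono {e e' : ℕ} {f : ℕ → ℝ} (hee : e ≤ e') (hf : Bnd e f) : Bnd e' f := by
  obtain ⟨C, hC, h⟩ := hf
  refine ⟨C, hC, fun m hm => ?_⟩
  refine (h m hm).trans ?_
  have : (m:ℝ)^e ≤ (m:ℝ)^e' := pow_le_pow_right₀ (by exact_mod_cast hm) hee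
  nlinarith

lemma congr {e : ℕ} {f g : ℕ → ℝ} (h : ∀ m, 1 ≤ m → f m = g m) (hf : Bnd e f) :
    Bnd e g := by
  obtain ⟨C, hC, hb⟩ := hf
  exact ⟨C, hC, fun m hm => (h m hm) ▸ hb m hm⟩

lemma finsum {ι : Type*} {e : ℕ} (s : Finset ι) (F : ι → ℕ → ℝ)
    (h : ∀ i ∈ s, Bnd e (F i)) : Bnd e (fun m => ∑ i ∈ s, F i m) := by
  classical
  induction s using Finset.induction_on with
  | empty => exact (const e 0).congr (fun m _ => by simp)
  | @insert x s hx ih =>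
    have := (add (h x (Finset.mem_insert_self x s))
      (ih (fun i hi => h i (Finset.mem_insert_of_mem hi))))
    exact this.congr (fun m _ => by rw [Finset.sum_insert hx])

lemma pow {e e' : ℕ} (hee : e' ≤ e) : Bnd e (fun m => (m:ℝ) ^ e') :=
  mono hee ⟨1, one_pos, fun m hm => by
    rw [abs_of_nonneg (by positivity), one_mul]⟩

lemma sumRange {e : ℕ} {f : ℕ → ℝ} (hf : Bnd e f) :
    Bnd (e + 1) (fun m => ∑ j ∈ Finset.range m, f j) := by
  obtain ⟨C, hC, h⟩ := hf
  refine ⟨C + |f 0| + 1, by positivity, fun m hm => ?_⟩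
  have key : ∀ j ∈ Finset.range m, |f j| ≤ |f 0| + C * (m:ℝ)^e := by
    intro j hj
    rw [Finset.mem_range] at hj
    rcases Nat.eq_zero_or_pos j with rfl | hj1
    · have := mul_pos hC (cast_pow_pos hm e)
      nlinarith [abs_nonneg (f 0)]
    · have hje : ((j:ℝ))^e ≤ (m:ℝ)^e := by
        apply pow_le_pow_left₀ (by positivity)
        exact_mod_cast hj.le
      calc |f j| ≤ C * (j:ℝ)^e := h j hj1
        _ ≤ C * (m:ℝ)^e := by nlinarith
        _ ≤ |f 0| + C * (m:ℝ)^e := by nlinarith [abs_nonneg (f 0)]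
  calc |∑ j ∈ Finset.range m, f j| ≤ ∑ j ∈ Finset.range m, |f j| :=
        Finset.abs_sum_le_sum_abs _ _
    _ ≤ ∑ _j ∈ Finset.range m, (|f 0| + C * (m:ℝ)^e) := Finset.sum_le_sum key
    _ = (m:ℝ) * (|f 0| + C * (m:ℝ)^e) := by rw [Finset.sum_const, Finset.card_range]; ring
    _ ≤ (C + |f 0| + 1) * (m:ℝ)^(e+1) := by
        have h1 := one_le_cast_pow hm e
        have hm1 : (1:ℝ) ≤ (m:ℝ) := by exact_mod_cast hm
        have : (m:ℝ)^(e+1) = (m:ℝ) * (m:ℝ)^e := by ring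
        rw [this]
        have e1 : (m:ℝ) ≤ (m:ℝ) * (m:ℝ)^e := by nlinarith
        have e2 : (m:ℝ) * |f 0| ≤ ((m:ℝ) * (m:ℝ)^e) * |f 0| :=
          mul_le_mul_of_nonneg_right e1 (abs_nonneg _)
        nlinarith [cast_pow_pos hm e]

end Bnd

lemma pow_succ_sub_bounds (x : ℝ) (hx : 0 ≤ x) (d : ℕ) :
    ((d:ℝ)+1) * x^d ≤ (x+1)^(d+1) - x^(d+1) ∧
      (x+1)^(d+1) - x^(d+1) ≤ ((d:ℝ)+1) * (x+1)^d := by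
  have hg := geom_sum₂_mul (x+1) x (d+1)
  rw [show (x+1) - x = 1 by ring, mul_one] at hg
  rw [← hg]
  have hterm : ∀ i ∈ Finset.range (d+1),
      x^d ≤ (x+1)^i * x^(d+1-1-i) ∧ (x+1)^i * x^(d+1-1-i) ≤ (x+1)^d := by
    intro i hi
    rw [Finset.mem_range] at hi
    have hid : d + 1 - 1 - i = d - i := by omega
    rw [hid]
    constructor
    · calc x^d = x^i * x^(d-i) := by rw [← pow_add]; congr 1; omega
        _ ≤ (x+1)^i * x^(d-i) := by gcongr <;> linarith
    · calc (x+1)^i * x^(d-i) ≤ (x+1)^i * (x+1)^(d-i) := by gcongr <;> linarith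
        _ = (x+1)^d := by rw [← pow_add]; congr 1; omega
  constructor
  · calc ((d:ℝ)+1) * x^d = ∑ _i ∈ Finset.range (d+1), x^d := by
          rw [Finset.sum_const, Finset.card_range]; push_cast; ring
      _ ≤ _ := Finset.sum_le_sum (fun i hi => (hterm i hi).1)
  · calc _ ≤ ∑ _i ∈ Finset.range (d+1), (x+1)^d :=
          Finset.sum_le_sum (fun i hi => (hterm i hi).2)
      _ = ((d:ℝ)+1) * (x+1)^d := by
          rw [Finset.sum_const, Finset.card_range]; push_cast; ring

lemma faul (d : ℕ) (hd : 1 ≤ d) :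
    Bnd d (fun m => (∑ j ∈ Finset.range m, (j:ℝ)^d) - (m:ℝ)^(d+1)/((d:ℝ)+1)) := by
  refine ⟨(d:ℝ)+1, by positivity, fun m hm => ?_⟩
  show |(∑ j ∈ Finset.range m, (j:ℝ)^d) - (m:ℝ)^(d+1)/((d:ℝ)+1)| ≤ ((d:ℝ)+1) * (m:ℝ)^d
  set f : ℕ → ℝ := fun j => (j:ℝ)^(d+1)/((d:ℝ)+1) with hf
  set g : ℕ → ℝ := fun j => f (j+1) - f j - (j:ℝ)^d with hgdef
  have htel : ∑ j ∈ Finset.range m, (f (j+1) - f j) = f m - f 0 :=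
    Finset.sum_range_sub f m
  have hf0 : f 0 = 0 := by simp [hf]
  have hsum : ∑ j ∈ Finset.range m, g j = f m - ∑ j ∈ Finset.range m, (j:ℝ)^d := by
    simp only [hgdef]
    rw [Finset.sum_sub_distrib, htel, hf0]
    ring
  have hfm : f m = (m:ℝ)^(d+1)/((d:ℝ)+1) := rfl
  have hkey : (∑ j ∈ Finset.range m, (j:ℝ)^d) - (m:ℝ)^(d+1)/((d:ℝ)+1) =
      -∑ j ∈ Finset.range m, g j := by
    rw [hsum, hfm]
    ring
  have hd1 : (0:ℝ) < (d:ℝ)+1 := by positivity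
  have hg_lb : ∀ j : ℕ, 0 ≤ g j := by
    intro j
    have h1 := (pow_succ_sub_bounds (j:ℝ) (by positivity) d).1
    have : (j:ℝ)^d ≤ f (j+1) - f j := by
      rw [hf]
      push_cast
      rw [div_sub_div_same, le_div_iff₀ hd1]
      nlinarith
    simp only [hgdef]
    linarith
  have hg_ub : ∀ j : ℕ, j < m → g j ≤ (d:ℝ) * (m:ℝ)^(d-1) := by
    intro j hj
    have h2 := (pow_succ_sub_bounds (j:ℝ) (by positivity) d).2
    have h3 : f (j+1) - f j ≤ ((j:ℝ)+1)^d := by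
      rw [hf]
      push_cast
      rw [div_sub_div_same, div_le_iff₀ hd1]
      nlinarith
    have h4 := (pow_succ_sub_bounds (j:ℝ) (by positivity) (d-1)).2
    rw [show d - 1 + 1 = d from by omega] at h4
    have h5 : ((j:ℝ)+1)^(d-1) ≤ (m:ℝ)^(d-1) := by
      apply pow_le_pow_left₀ (by positivity)
      have : (j:ℕ) + 1 ≤ m := hj
      exact_mod_cast this
    have h6 : ((d:ℝ)-1+1) = (d:ℝ) := by ring
    have hd0 : (0:ℝ) ≤ (d:ℝ) := by positivity
    simp only [hgdef]
    push_cast [show ((d-1:ℕ):ℝ) = (d:ℝ)-1 from by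
      have : (1:ℕ) ≤ d := hd
      push_cast [Nat.cast_sub this]
      ring] at h4
    nlinarith
  rw [hkey, abs_neg, abs_of_nonneg (Finset.sum_nonneg (fun j _ => hg_lb j))]
  calc ∑ j ∈ Finset.range m, g j ≤ ∑ _j ∈ Finset.range m, (d:ℝ) * (m:ℝ)^(d-1) :=
        Finset.sum_le_sum (fun j hj => hg_ub j (Finset.mem_range.mp hj))
    _ = (m:ℝ) * ((d:ℝ) * (m:ℝ)^(d-1)) := by
        rw [Finset.sum_const, Finset.card_range]; ring
    _ ≤ ((d:ℝ)+1) * (m:ℝ)^d := by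
        have : (m:ℝ) * (m:ℝ)^(d-1) = (m:ℝ)^d := by
          rw [← pow_succ']
          congr 1
          omega
        nlinarith [Bnd.cast_pow_pos hm d]

noncomputable def aa (n : ℕ) : ℝ := (n.factorial : ℝ) / 2 ^ (n - 1)

def keyP (n : ℕ) : Prop :=
  Bnd (n - 2) (fun m => (higherBell m n : ℝ) - aa n * (m : ℝ) ^ (n - 1))

lemma keyP_two : keyP 2 := by
  refine (Bnd.const 0 1).congr (fun m hm => ?_)
  show (1:ℝ) = (higherBell m 2 : ℝ) - aa 2 * (m:ℝ)^(2-1)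
  rw [hb_two]
  have h2 : aa 2 = 1 := by norm_num [aa, Nat.factorial]
  rw [h2]
  push_cast
  ring

lemma hb_bnd_one : Bnd 0 (fun j => (higherBell j 1 : ℝ)) := by
  refine (Bnd.const 0 1).congr (fun m hm => ?_)
  rw [hb_one]
  norm_num

lemma hb_bnd_of_keyP {k : ℕ} (h : keyP k) :
    Bnd (k-1) (fun j => (higherBell j k : ℝ)) := by
  have h1 : Bnd (k-1) (fun m => (higherBell m k : ℝ) - aa k * (m:ℝ)^(k-1)) :=
    h.mono (by omega)
  have h2 : Bnd (k-1) (fun m => aa k * (m:ℝ)^(k-1)) :=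
    (Bnd.pow le_rfl).cmul (aa k)
  exact (h1.add h2).congr (fun m hm => by ring)

lemma keyP_step (u : ℕ) (ih : ∀ k, 2 ≤ k → k ≤ u + 2 → keyP k) : keyP (u+3) := by
  set D : ℕ → ℝ := fun j =>
    ∑ k ∈ Finset.Icc 1 (u+2), (stirling (u+3) k : ℝ) * (higherBell j k : ℝ) with hD
  set b : ℝ := aa (u+2) * (stirling (u+3) (u+2) : ℝ) with hbdef
  have hcast : ∀ m : ℕ, (higherBell m (u+3) : ℝ) = 1 + ∑ j ∈ Finset.range m, D j := by
    intro m
    rw [hb_telescope (u+2) m]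
    push_cast
    rw [hD]
    congr 1
    refine Finset.sum_congr rfl (fun j _ => Finset.sum_congr rfl (fun k _ => by ring))
  have hS : (stirling (u+3) (u+2) : ℝ) = ((u:ℝ)+2) * ((u:ℝ)+3) / 2 := by
    have h := stirling_succ_self (u+2)
    have h' : (2:ℝ) * (stirling (u+3) (u+2) : ℝ) = ((u:ℝ)+2) * ((u:ℝ)+3) := by
      exact_mod_cast congrArg (Nat.cast : ℕ → ℝ) h
    linarith
  have hfact : ((u+3).factorial : ℝ) = ((u:ℝ)+3) * ((u+2).factorial : ℝ) := by
    rw [show (u+3) = (u+2)+1 from rfl, Nat.factorial_succ]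
    push_cast
    ring
  have hb_id : b = ((u:ℝ)+2) * aa (u+3) := by
    rw [hbdef, hS]
    show ((u+2).factorial : ℝ) / 2^(u+1) * _ = ((u:ℝ)+2) * (((u+3).factorial : ℝ) / 2^(u+2))
    rw [hfact, pow_succ]
    field_simp
    ring
  -- the k = u+2 (top) term of D, recentred
  have hB : Bnd u (fun j => (stirling (u+3) (u+2) : ℝ) *
      ((higherBell j (u+2) : ℝ) - aa (u+2) * (j:ℝ)^(u+1))) := by
    have := ih (u+2) (by omega) le_rfl
    exact (this : Bnd u _).cmul _
  -- the lower terms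
  have hA : Bnd u (fun j => ∑ k ∈ Finset.Icc 1 (u+1),
      (stirling (u+3) k : ℝ) * (higherBell j k : ℝ)) := by
    refine Bnd.finsum _ _ (fun k hk => ?_)
    rw [Finset.mem_Icc] at hk
    refine Bnd.cmul _ (Bnd.mono (show k - 1 ≤ u by omega) ?_)
    rcases Nat.lt_or_ge k 2 with h2 | h2
    · have hk1 : k = 1 := by omega
      subst hk1
      exact hb_bnd_one
    · exact hb_bnd_of_keyP (ih k h2 (by omega))
  have h1 : Bnd u (fun j => D j - b * (j:ℝ)^(u+1)) := by
    refine (hA.add hB).congr (fun j hj => ?_)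
    show _ = D j - b * (j:ℝ)^(u+1)
    simp only [hD, hbdef]
    rw [Finset.sum_Icc_succ_top (by omega : 1 ≤ u+2)]
    ring
  have h2 := h1.sumRange
  have h3 : Bnd (u+1) (fun m => b * ((∑ j ∈ Finset.range m, (j:ℝ)^(u+1)) -
      (m:ℝ)^(u+2)/(((u+1:ℕ):ℝ)+1))) := (faul (u+1) (by omega)).cmul b
  have h4 : Bnd (u+1) (fun _ => (1:ℝ)) := Bnd.const _ 1
  show Bnd (u+1) (fun m => (higherBell m (u+3) : ℝ) - aa (u+3) * (m:ℝ)^(u+2))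
  refine ((h4.add h2).add h3).congr (fun m hm => ?_)
  rw [hcast m, Finset.sum_sub_distrib, ← Finset.mul_sum, hb_id]
  have hu2 : ((u:ℝ)+2) ≠ 0 := by positivity
  push_cast
  field_simp
  ring

lemma keyP_all : ∀ n, 2 ≤ n → keyP n := by
  intro n
  induction n using Nat.strong_induction_on with
  | _ n ih =>
    intro hn
    rcases Nat.lt_or_ge n 3 with h | h
    · have : n = 2 := by omega
      subst this
      exact keyP_two
    · obtain ⟨u, rfl⟩ : ∃ u, n = u + 3 := ⟨n - 3, by omega⟩
      exact keyP_step u (fun k hk2 hku => ih k (by omega) hk2)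

theorem stmt19 (n : ℕ) (hn : 1 ≤ n) :
    ∃ C : ℝ, 0 < C ∧ ∀ m : ℕ, 1 ≤ m →
      |(higherBell m n : ℝ) - (n.factorial / 2 ^ (n - 1)) * (m : ℝ) ^ (n - 1)| ≤
        C * (m : ℝ) ^ ((n : ℤ) - 2) := by
  rcases Nat.lt_or_ge n 2 with h | h
  · have hn1 : n = 1 := by omega
    subst hn1
    refine ⟨1, one_pos, fun m hm => ?_⟩
    rw [hb_one, Nat.cast_one]
    have hm0 : (0:ℝ) < (m:ℝ) := by exact_mod_cast Nat.lt_of_lt_of_le Nat.zero_lt_one hm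
    have hlhs : |(1:ℝ) - ((Nat.factorial 1 : ℝ) / 2 ^ (1-1)) * (m:ℝ)^(1-1)| = 0 := by
      norm_num [Nat.factorial]
    rw [hlhs]
    positivity
  · obtain ⟨C, hC, hb⟩ := keyP_all n h
    refine ⟨C, hC, fun m hm => ?_⟩
    have hthis := hb m hm
    have hz : (m:ℝ)^((n:ℤ)-2) = (m:ℝ)^(n-2 : ℕ) := by
      rw [show (n:ℤ)-2 = ((n-2:ℕ):ℤ) by omega, zpow_natCast]
    rw [hz]
    exact hthis
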